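/- arXiv:1204.4465 — 3 statements merged into one kernel-verified Lean document; each statement's English description precedes it below -/
import Mathlib

section
/- (Telescoping Lemma, Lemma 1) Let (Ω, μ) be a probability space with a filtration ℱ indexed by ℕ. Let L : ℕ → Ω → ℝ be a sequence of integrable random variables with L k nonnegative almost everywhere and L k measurable with respect to ℱ k for every k, and let f : ℕ → Ω → ℝ be a sequence of integrable random variables with f k measurable with respect to ℱ k for every k. Suppose there exist constants B > 0 and δ > 0 such that for every k, μ[L (k+1) − L k | ℱ k] ≤ B − δ · μ[f k | ℱ k] almost everywhere. Then limsup_{K→∞} (1/K) · ∑_{k=0}^{K−1} E[f k] ≤ B/δ, where E[·] denotes expectation (integral) with respect to μ. -/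
open MeasureTheory Filter

/-!
Taking expectations in the drift inequality (the tower property removes the conditioning) gives
`E[L (k+1)] - E[L k] ≤ B - δ E[f k]`. Summing over `k < K` telescopes the left side to
`E[L K] - E[L 0] ≥ -E[L 0]`, so `δ ∑_{k<K} E[f k] ≤ K B + E[L 0]`; dividing by `δ K` and letting
`K → ∞` gives the bound.
-/

namespace Real

/-- The hypothesis `0 ≤ c` covers the junk value `limsup u l = 0` when `u` is not cobounded. -/
theorem limsup_le_of_eventuallyLE_of_tendsto {ι : Type*} {l : Filter ι} [l.NeBot]
    {u g : ι → ℝ} {c : ℝ} (hc : 0 ≤ c) (hug : u ≤ᶠ[l] g) (hg : Tendsto g l (nhds c)) :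
    limsup u l ≤ c := by
  by_cases hu : l.IsCoboundedUnder (· ≤ ·) u
  · calc limsup u l ≤ limsup g l := limsup_le_limsup hug hu hg.isBoundedUnder_le
      _ = c := hg.limsup_eq
  · rw [limsup_of_not_isCoboundedUnder hu]
    exact hc

end Real

section Drift

variable {a x : ℕ → ℝ} {B δ : ℝ}

theorem mul_sum_le_of_drift (hdrift : ∀ k, a (k + 1) - a k ≤ B - δ * x k) {K : ℕ}
    (haK : 0 ≤ a K) : δ * ∑ k ∈ Finset.range K, x k ≤ K * B + a 0 := by
  have hsum : a K - a 0 ≤ K * B - δ * ∑ k ∈ Finset.range K, x k := by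
    calc a K - a 0 = ∑ k ∈ Finset.range K, (a (k + 1) - a k) := (Finset.sum_range_sub a K).symm
      _ ≤ ∑ k ∈ Finset.range K, (B - δ * x k) := Finset.sum_le_sum fun k _ => hdrift k
      _ = K * B - δ * ∑ k ∈ Finset.range K, x k := by
        rw [Finset.sum_sub_distrib, Finset.sum_const, Finset.card_range, nsmul_eq_mul,
          Finset.mul_sum]
  linarith

theorem cesaro_mean_le_of_drift (hδ : 0 < δ) (ha : ∀ k, 0 ≤ a k)
    (hdrift : ∀ k, a (k + 1) - a k ≤ B - δ * x k) {K : ℕ} (hK : 0 < K) :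
    (1 / (K : ℝ)) * ∑ k ∈ Finset.range K, x k ≤ B / δ + a 0 / δ / K := by
  have hKpos : (0 : ℝ) < K := by exact_mod_cast hK
  rw [one_div, inv_mul_le_iff₀ hKpos]
  calc ∑ k ∈ Finset.range K, x k ≤ (K * B + a 0) / δ := by
        rw [le_div_iff₀ hδ, mul_comm]
        exact mul_sum_le_of_drift hdrift (ha K)
    _ = K * (B / δ + a 0 / δ / K) := by field_simp

theorem limsup_cesaro_mean_le_of_drift (hB : 0 ≤ B) (hδ : 0 < δ) (ha : ∀ k, 0 ≤ a k)
    (hdrift : ∀ k, a (k + 1) - a k ≤ B - δ * x k) :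
    limsup (fun K : ℕ => (1 / (K : ℝ)) * ∑ k ∈ Finset.range K, x k) atTop ≤ B / δ := by
  have hbound : Tendsto (fun K : ℕ => B / δ + a 0 / δ / K) atTop (nhds (B / δ)) := by
    simpa using tendsto_const_nhds.add (tendsto_const_div_atTop_nhds_zero_nat (a 0 / δ))
  refine Real.limsup_le_of_eventuallyLE_of_tendsto (div_nonneg hB hδ.le) ?_ hbound
  filter_upwards [eventually_gt_atTop 0] with K hK
  exact cesaro_mean_le_of_drift hδ ha hdrift hK

end Drift

theorem integral_sub_le_of_condExp_sub_le {Ω : Type*} {m m₀ : MeasurableSpace Ω}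
    {μ : Measure Ω} [IsProbabilityMeasure μ] (hm : m ≤ m₀) {X Y g : Ω → ℝ}
    (hX : Integrable X μ) (hY : Integrable Y μ) {B δ : ℝ}
    (hdrift : μ[Y - X | m] ≤ᵐ[μ] fun ω => B - δ * (μ[g | m]) ω) :
    ∫ ω, Y ω ∂μ - ∫ ω, X ω ∂μ ≤ B - δ * ∫ ω, g ω ∂μ := by
  have hrhs : Integrable (fun ω => B - δ * (μ[g | m]) ω) μ :=
    (integrable_const B).sub (integrable_condExp.const_mul δ)
  calc ∫ ω, Y ω ∂μ - ∫ ω, X ω ∂μ = ∫ ω, (μ[Y - X | m]) ω ∂μ := by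
        rw [integral_condExp hm]
        exact (integral_sub hY hX).symm
    _ ≤ ∫ ω, (B - δ * (μ[g | m]) ω) ∂μ := integral_mono_ae integrable_condExp hrhs hdrift
    _ = B - δ * ∫ ω, g ω ∂μ := by
        rw [integral_sub (integrable_const B) (integrable_condExp.const_mul δ), integral_const,
          integral_const_mul, integral_condExp hm, probReal_univ, one_smul]

theorem telescoping_lemma_general
    {Ω : Type*} {m : MeasurableSpace Ω} {μ : Measure Ω} [IsProbabilityMeasure μ]
    (ℱ : Filtration ℕ m)
    (L : ℕ → Ω → ℝ) (f : ℕ → Ω → ℝ)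
    (hLint : ∀ k, Integrable (L k) μ)
    (hLnonneg : ∀ k, 0 ≤ᵐ[μ] L k)
    (B δ : ℝ) (hB : 0 < B) (hδ : 0 < δ)
    (hdrift : ∀ k,
      μ[L (k + 1) - L k | ℱ k] ≤ᵐ[μ] fun ω => B - δ * (μ[f k | ℱ k]) ω) :
    limsup (fun K : ℕ => (1 / (K : ℝ)) * ∑ k ∈ Finset.range K, ∫ ω, f k ω ∂μ) atTop
      ≤ B / δ :=
  limsup_cesaro_mean_le_of_drift hB.le hδ (fun k => integral_nonneg_of_ae (hLnonneg k))
    fun k => integral_sub_le_of_condExp_sub_le (ℱ.le k) (hLint k) (hLint (k + 1)) (hdrift k)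

/-- **Telescoping Lemma (Lemma 1).** If `L k` is a nonnegative integrable Lyapunov process
adapted to the filtration `ℱ`, `f k` is an integrable adapted process, and the conditional
drift satisfies `μ[L (k+1) − L k | ℱ k] ≤ B − δ · μ[f k | ℱ k]` a.e. for constants
`B > 0`, `δ > 0`, then `limsup_{K→∞} (1/K) ∑_{k=0}^{K−1} E[f k] ≤ B / δ`. -/
theorem telescoping_lemma
    {Ω : Type*} {m : MeasurableSpace Ω} {μ : Measure Ω} [IsProbabilityMeasure μ]
    (ℱ : Filtration ℕ m)
    (L : ℕ → Ω → ℝ) (f : ℕ → Ω → ℝ)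
    (hLint : ∀ k, Integrable (L k) μ)
    (hLnonneg : ∀ k, 0 ≤ᵐ[μ] L k)
    (hLadapted : ∀ k, StronglyMeasurable[ℱ k] (L k))
    (hfint : ∀ k, Integrable (f k) μ)
    (hfadapted : ∀ k, StronglyMeasurable[ℱ k] (f k))
    (B δ : ℝ) (hB : 0 < B) (hδ : 0 < δ)
    (hdrift : ∀ k,
      μ[L (k + 1) - L k | ℱ k] ≤ᵐ[μ] fun ω => B - δ * (μ[f k | ℱ k]) ω) :
    limsup (fun K : ℕ => (1 / (K : ℝ)) * ∑ k ∈ Finset.range K, ∫ ω, f k ω ∂μ) atTop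
      ≤ B / δ :=
  telescoping_lemma_general ℱ L f hLint hLnonneg B δ hB hδ hdrift
end

section
/- (Deterministic analogue of Theorem 1, Cesàro bound Eq. (4)) Let F be a finite set, ε > 0, and q : F → ℝ with 0 < q f ≤ 1 for all f ∈ F. Let S be a nonempty set of functions y : F → ℝ with 0 ≤ y f ≤ 1 for all y ∈ S and all f, and suppose there exists ŷ ∈ S with ŷ f ≥ (1+ε) · q f for every f. Let d : ℕ → F → ℝ and e : ℕ → F → ℝ satisfy: d 0 f = 0 for all f; for every k, e(k+1) ∈ S and e(k+1) maximizes ∑_{f ∈ F} (d k f)⁺ · y f over all y ∈ S; and d(k+1) f = d k f + q f − e(k+1) f for all f. Then limsup_{K→∞} (1/K) · ∑_{k=0}^{K−1} ∑_{f ∈ F} (d k f)⁺ · q f ≤ (|F|/2)/ε. -/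
/-!
The potential `V(d) = ∑_f ((d f)⁺)²` drifts down along the policy. Since each jump
`q f - e f` lies in `[-1, 1]`, one step raises `V` by at most `2 ∑_f (d f)⁺ (q f - e f) + |F|`;
the maximizing choice of `e` beats the feasible `ŷ ≥ (1 + ε) q`, which turns the middle term
into at most `-2ε ∑_f (d f)⁺ q f`. Telescoping from `V(d 0) = 0` and dropping `V ≥ 0` bounds
`2ε` times the cumulative weighted debt by `K |F|`.
-/

open Finset Filter

theorem sq_max_add_zero_le_sq_max_zero_add (x δ : ℝ) :
    max (x + δ) 0 ^ 2 ≤ (max x 0 + δ) ^ 2 := by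
  rcases le_total (x + δ) 0 with h | h
  · rw [max_eq_right h, zero_pow two_ne_zero]
    exact sq_nonneg _
  · rw [max_eq_left h]
    exact pow_le_pow_left₀ h (by linarith [le_max_left x 0]) 2

theorem sq_max_add_zero_le (x δ : ℝ) (hδ : |δ| ≤ 1) :
    max (x + δ) 0 ^ 2 ≤ max x 0 ^ 2 + 2 * max x 0 * δ + 1 := by
  have hδsq : δ ^ 2 ≤ 1 := by nlinarith [sq_abs δ, abs_nonneg δ]
  nlinarith [sq_max_add_zero_le_sq_max_zero_add x δ]

section Potential

variable {F : Type*} [Fintype F]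

def posPartSqSum (x : F → ℝ) : ℝ := ∑ f, max (x f) 0 ^ 2

theorem posPartSqSum_nonneg (x : F → ℝ) : 0 ≤ posPartSqSum x :=
  sum_nonneg fun _ _ => sq_nonneg _

@[simp]
theorem posPartSqSum_zero : posPartSqSum (0 : F → ℝ) = 0 := by
  simp [posPartSqSum]

theorem posPartSqSum_add_le (x δ : F → ℝ) (hδ : ∀ f, |δ f| ≤ 1) :
    posPartSqSum (x + δ) ≤
      posPartSqSum x + 2 * ∑ f, max (x f) 0 * δ f + Fintype.card F := by
  calc posPartSqSum (x + δ)
      ≤ ∑ f, (max (x f) 0 ^ 2 + 2 * max (x f) 0 * δ f + 1) :=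
        sum_le_sum fun f _ => sq_max_add_zero_le (x f) (δ f) (hδ f)
    _ = posPartSqSum x + 2 * ∑ f, max (x f) 0 * δ f + Fintype.card F := by
        simp only [posPartSqSum, sum_add_distrib, mul_sum, mul_assoc, sum_const, card_univ,
          nsmul_eq_mul, mul_one]

theorem sum_mul_sub_le_neg_mul_of_dominates {ε : ℝ} {w q y z : F → ℝ} (hw : ∀ f, 0 ≤ w f)
    (hqy : ∀ f, (1 + ε) * q f ≤ y f) (hyz : ∑ f, w f * y f ≤ ∑ f, w f * z f) :
    ∑ f, w f * (q f - z f) ≤ -ε * ∑ f, w f * q f := by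
  have hwy : (1 + ε) * ∑ f, w f * q f ≤ ∑ f, w f * y f := by
    rw [mul_sum]
    refine sum_le_sum fun f _ => ?_
    nlinarith [mul_le_mul_of_nonneg_left (hqy f) (hw f)]
  simp only [mul_sub, sum_sub_distrib]
  linarith

end Potential

theorem mul_sum_range_le_of_drift {V W : ℕ → ℝ} {c b : ℝ} (hV0 : V 0 = 0) (hV : ∀ k, 0 ≤ V k)
    (hstep : ∀ k, V (k + 1) ≤ V k - c * W k + b) (K : ℕ) :
    c * ∑ k ∈ range K, W k ≤ K * b := by
  have hcum : ∀ K : ℕ, V K + c * ∑ k ∈ range K, W k ≤ K * b := by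
    intro K
    induction K with
    | zero => simp [hV0]
    | succ K ih =>
      rw [sum_range_succ]
      push_cast
      linarith [hstep K]
  linarith [hcum K, hV K]

theorem limsup_cesaro_le_of_mul_sum_range_le {W : ℕ → ℝ} {c b : ℝ} (hc : 0 < c)
    (hW : ∀ k, 0 ≤ W k) (h : ∀ K : ℕ, c * ∑ k ∈ range K, W k ≤ K * b) :
    limsup (fun K : ℕ => (1 / (K : ℝ)) * ∑ k ∈ range K, W k) atTop ≤ b / c := by
  refine limsup_le_of_le ?_ ?_
  · exact isCoboundedUnder_le_of_le atTop fun K =>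
      mul_nonneg (by positivity) (sum_nonneg fun k _ => hW k)
  · filter_upwards [eventually_gt_atTop 0] with K hK
    have hK' : (0 : ℝ) < K := Nat.cast_pos.mpr hK
    rw [one_div, inv_mul_le_iff₀ hK', ← mul_div_assoc, le_div_iff₀ hc]
    linarith [h K]

theorem cesaro_debt_bound_general
    {F : Type*} [Fintype F] (ε : ℝ) (hε : 0 < ε)
    (q : F → ℝ) (hq : ∀ f, 0 < q f ∧ q f ≤ 1)
    (S : Set (F → ℝ))
    (hS01 : ∀ y ∈ S, ∀ f, 0 ≤ y f ∧ y f ≤ 1)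
    (hfeas : ∃ yhat ∈ S, ∀ f, (1 + ε) * q f ≤ yhat f)
    (d : ℕ → F → ℝ) (e : ℕ → F → ℝ)
    (hd0 : ∀ f, d 0 f = 0)
    (heS : ∀ k, e (k + 1) ∈ S)
    (hmax : ∀ k, ∀ y ∈ S,
      ∑ f : F, max (d k f) 0 * y f ≤ ∑ f : F, max (d k f) 0 * e (k + 1) f)
    (hrec : ∀ k f, d (k + 1) f = d k f + q f - e (k + 1) f) :
    limsup
      (fun K : ℕ => (1 / (K : ℝ)) * ∑ k ∈ Finset.range K, ∑ f : F, max (d k f) 0 * q f)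
      atTop
      ≤ ((Fintype.card F : ℝ) / 2) / ε := by
  obtain ⟨yhat, hyhatS, hyhat⟩ := hfeas
  have hd : ∀ k, d (k + 1) = d k + (q - e (k + 1)) := fun k => funext fun f => by
    simp only [hrec, Pi.add_apply, Pi.sub_apply]
    ring
  have hjump : ∀ k f, |(q - e (k + 1)) f| ≤ 1 := fun k f => by
    obtain ⟨he0, he1⟩ := hS01 _ (heS k) f
    rw [Pi.sub_apply, abs_le]
    constructor <;> linarith [hq f]
  have hdrift : ∀ k, posPartSqSum (d (k + 1)) ≤
      posPartSqSum (d k) - 2 * ε * ∑ f, max (d k f) 0 * q f + Fintype.card F := fun k => by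
    have hpot := posPartSqSum_add_le (d k) _ (hjump k)
    simp only [Pi.sub_apply] at hpot
    rw [hd k]
    linarith [sum_mul_sub_le_neg_mul_of_dominates (fun f => le_max_right (d k f) 0) hyhat
      (hmax k yhat hyhatS)]
  rw [div_div]
  refine limsup_cesaro_le_of_mul_sum_range_le (mul_pos two_pos hε)
    (fun k => sum_nonneg fun f _ => mul_nonneg (le_max_right _ _) (hq f).1.le)
    (mul_sum_range_le_of_drift ?_ (fun k => posPartSqSum_nonneg _) hdrift)
  rw [show d 0 = 0 from funext hd0, posPartSqSum_zero]

/-- **Deterministic analogue of Theorem 1 (Cesàro bound, Eq. (4)).** Under strict feasibility,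
the debt-weighted maximizing policy satisfies
`limsup_{K→∞} (1/K) ∑_{k<K} ∑_f (d k f)⁺ q f ≤ (|F|/2)/ε`. -/
theorem cesaro_debt_bound
    {F : Type*} [Fintype F] (ε : ℝ) (hε : 0 < ε)
    (q : F → ℝ) (hq : ∀ f, 0 < q f ∧ q f ≤ 1)
    (S : Set (F → ℝ)) (hS : S.Nonempty)
    (hS01 : ∀ y ∈ S, ∀ f, 0 ≤ y f ∧ y f ≤ 1)
    (hfeas : ∃ yhat ∈ S, ∀ f, (1 + ε) * q f ≤ yhat f)
    (d : ℕ → F → ℝ) (e : ℕ → F → ℝ)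
    (hd0 : ∀ f, d 0 f = 0)
    (heS : ∀ k, e (k + 1) ∈ S)
    (hmax : ∀ k, ∀ y ∈ S,
      ∑ f : F, max (d k f) 0 * y f ≤ ∑ f : F, max (d k f) 0 * e (k + 1) f)
    (hrec : ∀ k f, d (k + 1) f = d k f + q f - e (k + 1) f) :
    limsup
      (fun K : ℕ => (1 / (K : ℝ)) * ∑ k ∈ Finset.range K, ∑ f : F, max (d k f) 0 * q f)
      atTop
      ≤ ((Fintype.card F : ℝ) / 2) / ε :=
  cesaro_debt_bound_general ε hε q hq S hS01 hfeas d e hd0 heS hmax hrec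
end

section
/- (Deterministic analogue of Theorem 1, fulfillment) Let F be a finite set, ε > 0, and q : F → ℝ with 0 < q f ≤ 1 for all f ∈ F. Let S be a nonempty set of functions y : F → ℝ with 0 ≤ y f ≤ 1 for all y ∈ S and all f, and suppose there exists ŷ ∈ S with ŷ f ≥ (1+ε) · q f for every f. Let d : ℕ → F → ℝ and e : ℕ → F → ℝ satisfy: d 0 f = 0 for all f; for every k, e(k+1) ∈ S and e(k+1) maximizes ∑_{f ∈ F} (d k f)⁺ · y f over all y ∈ S; and d(k+1) f = d k f + q f − e(k+1) f for all f. Then for every f ∈ F, liminf_{K→∞} (1/K) · ∑_{k=1}^{K} e k f ≥ q f; equivalently, limsup_{K→∞} d K f / K ≤ 0 for every f ∈ F. -/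
/-!
The proof is the quadratic Lyapunov drift argument for max-weight scheduling. With
`V(x) = ∑_f ((x f)⁺)²`, one step changes each debt by `q f - e f ∈ [-1, 1]`, so
`V(d (k+1)) ≤ V(d k) + 2 ∑_f (d k f)⁺ (q f - e (k+1) f) + |F|`. Since `e (k+1)` maximizes the
debt-weighted sum over `S` and `ŷ ∈ S` dominates `(1 + ε) q`, the middle sum is at most
`-ε ∑_f (d k f)⁺ q f`. Hence `V` decreases whenever the weighted debt is large, and is bounded
when it is small, so `V`, and with it every debt, stays bounded. A bounded debt
`d K f = K q f - ∑_{k ≤ K} e k f` gives both asymptotic statements.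
-/

open Finset Filter

section Lyapunov

variable {F : Type*} [Fintype F]

def lyapunov (x : F → ℝ) : ℝ := ∑ f, max (x f) 0 ^ 2

lemma sq_max_add_le (a b : ℝ) : max (a + b) 0 ^ 2 ≤ (max a 0 + b) ^ 2 := by
  rcases le_total (a + b) 0 with h | h
  · rw [max_eq_right h, zero_pow two_ne_zero]
    positivity
  · rw [max_eq_left h]
    exact pow_le_pow_left₀ h (by linarith [le_max_left a 0]) 2

lemma lyapunov_le_add (x y : F → ℝ) (hxy : ∀ f, |y f - x f| ≤ 1) :
    lyapunov y ≤ lyapunov x + 2 * ∑ f, max (x f) 0 * (y f - x f) + Fintype.card F := by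
  have hstep : ∀ f, max (y f) 0 ^ 2 ≤
      max (x f) 0 ^ 2 + 2 * (max (x f) 0 * (y f - x f)) + 1 := fun f => by
    have hsq : (y f - x f) ^ 2 ≤ 1 := by
      simpa using sq_le_sq' (abs_le.mp (hxy f)).1 (abs_le.mp (hxy f)).2
    calc max (y f) 0 ^ 2 = max (x f + (y f - x f)) 0 ^ 2 := by rw [add_sub_cancel]
      _ ≤ (max (x f) 0 + (y f - x f)) ^ 2 := sq_max_add_le _ _
      _ ≤ _ := by nlinarith
  calc lyapunov y ≤ ∑ f, (max (x f) 0 ^ 2 + 2 * (max (x f) 0 * (y f - x f)) + 1) :=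
        sum_le_sum fun f _ => hstep f
    _ = _ := by simp only [sum_add_distrib, ← mul_sum, sum_const, card_univ, nsmul_one,
        lyapunov]

lemma le_sqrt_lyapunov (x : F → ℝ) (f : F) : x f ≤ Real.sqrt (lyapunov x) :=
  (le_max_left _ _).trans <| Real.le_sqrt_of_sq_le <|
    single_le_sum (f := fun g => max (x g) 0 ^ 2) (fun _ _ => sq_nonneg _) (mem_univ f)

lemma lyapunov_le_of_weighted_lt {x q : F → ℝ} {c r : ℝ} (hq : ∀ f, 0 < q f) (hc : 0 < c)
    (h : c * ∑ f, max (x f) 0 * q f < r) :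
    lyapunov x ≤ ∑ f, (r / (c * q f)) ^ 2 := by
  refine sum_le_sum fun f _ => pow_le_pow_left₀ (le_max_right _ _) ?_ 2
  have hcq : 0 < c * q f := mul_pos hc (hq f)
  have hterm : max (x f) 0 * q f ≤ ∑ g, max (x g) 0 * q g :=
    single_le_sum (f := fun g => max (x g) 0 * q g)
      (fun g _ => mul_nonneg (le_max_right _ _) (hq g).le) (mem_univ f)
  rw [le_div_iff₀ hcq]
  nlinarith

lemma sum_max_mul_sub_le_of_dominates {x q e yhat : F → ℝ} {ε : ℝ}
    (hmax : ∑ f, max (x f) 0 * yhat f ≤ ∑ f, max (x f) 0 * e f)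
    (hyhat : ∀ f, (1 + ε) * q f ≤ yhat f) :
    ∑ f, max (x f) 0 * (q f - e f) ≤ -ε * ∑ f, max (x f) 0 * q f := by
  have hdom : ∑ f, max (x f) 0 * ((1 + ε) * q f) ≤ ∑ f, max (x f) 0 * yhat f :=
    sum_le_sum fun f _ => mul_le_mul_of_nonneg_left (hyhat f) (le_max_right _ _)
  have hsub : ∑ f, max (x f) 0 * (q f - e f) =
      ∑ f, max (x f) 0 * q f - ∑ f, max (x f) 0 * e f := by
    simp only [mul_sub, sum_sub_distrib]
  have hscale : ∑ f, max (x f) 0 * ((1 + ε) * q f) = (1 + ε) * ∑ f, max (x f) 0 * q f := by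
    rw [mul_sum]
    exact sum_congr rfl fun f _ => by ring
  linarith

end Lyapunov

lemma le_of_drift_le {V W : ℕ → ℝ} {b B : ℝ} (h0 : V 0 ≤ B)
    (hdrift : ∀ k, V (k + 1) ≤ V k - W k + b)
    (hsmall : ∀ k, W k < b → V k - W k + b ≤ B) (k : ℕ) : V k ≤ B := by
  induction k with
  | zero => exact h0
  | succ k ih =>
    rcases le_or_gt b (W k) with hW | hW
    · linarith [hdrift k]
    · exact (hdrift k).trans (hsmall k hW)

lemma eq_sub_sum_Icc_of_rec {d e : ℕ → ℝ} {q : ℝ} (h0 : d 0 = 0)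
    (hrec : ∀ k, d (k + 1) = d k + q - e (k + 1)) (K : ℕ) :
    d K = K * q - ∑ k ∈ Icc 1 K, e k := by
  induction K with
  | zero => simp [h0]
  | succ K ih =>
    rw [hrec, ih, sum_Icc_succ_top (by omega)]
    push_cast
    ring

lemma sum_Icc_le_of_le_one {e : ℕ → ℝ} (he : ∀ k, e (k + 1) ≤ 1) (K : ℕ) :
    ∑ k ∈ Icc 1 K, e k ≤ K := by
  calc ∑ k ∈ Icc 1 K, e k ≤ ∑ _k ∈ Icc 1 K, (1 : ℝ) := sum_le_sum fun k hk => by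
        obtain ⟨j, rfl⟩ : ∃ j, k = j + 1 := ⟨k - 1, by grind⟩
        exact he j
    _ = K := by simp

lemma le_liminf_average_of_sub_le {s : ℕ → ℝ} {c C : ℝ} (hs : ∀ K, s K ≤ K)
    (hC : ∀ K, K * c - s K ≤ C) :
    c ≤ liminf (fun K : ℕ => 1 / (K : ℝ) * s K) atTop := by
  have hlim : Tendsto (fun K : ℕ => c - C / K) atTop (nhds c) := by
    simpa using tendsto_const_nhds.sub (tendsto_const_div_atTop_nhds_zero_nat C)
  have hlow : ∀ᶠ K : ℕ in atTop, c - C / K ≤ 1 / (K : ℝ) * s K := by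
    filter_upwards [eventually_gt_atTop 0] with K hK
    have hK : (0 : ℝ) < K := Nat.cast_pos.mpr hK
    rw [one_div_mul_eq_div, sub_le_iff_le_add, ← add_div, le_div_iff₀ hK]
    linarith [hC K]
  have hup : ∀ᶠ K : ℕ in atTop, 1 / (K : ℝ) * s K ≤ 1 := by
    filter_upwards [eventually_gt_atTop 0] with K hK
    rw [one_div_mul_eq_div, div_le_one (Nat.cast_pos.mpr hK)]
    exact hs K
  rw [← hlim.liminf_eq]
  exact liminf_le_liminf hlow hlim.isBoundedUnder_ge (isCoboundedUnder_ge_of_eventually_le _ hup)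

lemma limsup_div_le_zero_of_le {u : ℕ → ℝ} {C : ℝ} (hlow : ∀ K : ℕ, -(K : ℝ) ≤ u K)
    (hC : ∀ K, u K ≤ C) : limsup (fun K : ℕ => u K / K) atTop ≤ 0 := by
  have hlim := tendsto_const_div_atTop_nhds_zero_nat C
  have hup : ∀ᶠ K : ℕ in atTop, u K / K ≤ C / K :=
    Eventually.of_forall fun K => div_le_div_of_nonneg_right (hC K) K.cast_nonneg
  have hbdd : ∀ᶠ K : ℕ in atTop, -1 ≤ u K / K := by
    filter_upwards [eventually_gt_atTop 0] with K hK
    rw [le_div_iff₀ (Nat.cast_pos.mpr hK)]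
    linarith [hlow K]
  rw [← hlim.limsup_eq]
  exact limsup_le_limsup hup (isCoboundedUnder_le_of_eventually_le _ hbdd) hlim.isBoundedUnder_le

section MaxWeight

variable {F : Type*} [Fintype F] {ε : ℝ} {q : F → ℝ} {S : Set (F → ℝ)} {d e : ℕ → F → ℝ}

lemma lyapunov_drift (hq : ∀ f, 0 < q f ∧ q f ≤ 1) (hS01 : ∀ y ∈ S, ∀ f, 0 ≤ y f ∧ y f ≤ 1)
    (hfeas : ∃ yhat ∈ S, ∀ f, (1 + ε) * q f ≤ yhat f) (heS : ∀ k, e (k + 1) ∈ S)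
    (hmax : ∀ k, ∀ y ∈ S,
      ∑ f : F, max (d k f) 0 * y f ≤ ∑ f : F, max (d k f) 0 * e (k + 1) f)
    (hrec : ∀ k f, d (k + 1) f = d k f + q f - e (k + 1) f) (k : ℕ) :
    lyapunov (d (k + 1)) ≤
      lyapunov (d k) - 2 * ε * ∑ f, max (d k f) 0 * q f + Fintype.card F := by
  obtain ⟨yhat, hyS, hyhat⟩ := hfeas
  have hinc : ∀ f, d (k + 1) f - d k f = q f - e (k + 1) f := fun f => by
    rw [hrec]
    ring
  have hunit : ∀ f, |d (k + 1) f - d k f| ≤ 1 := fun f => by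
    rw [hinc, abs_le]
    constructor <;> linarith [hq f, hS01 _ (heS k) f]
  have hneg := sum_max_mul_sub_le_of_dominates (hmax k yhat hyS) hyhat
  have hstep := lyapunov_le_add (d k) (d (k + 1)) hunit
  simp only [hinc] at hstep
  linarith

lemma exists_forall_debt_le (hε : 0 < ε) (hq : ∀ f, 0 < q f ∧ q f ≤ 1)
    (hS01 : ∀ y ∈ S, ∀ f, 0 ≤ y f ∧ y f ≤ 1)
    (hfeas : ∃ yhat ∈ S, ∀ f, (1 + ε) * q f ≤ yhat f)
    (hd0 : ∀ f, d 0 f = 0) (heS : ∀ k, e (k + 1) ∈ S)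
    (hmax : ∀ k, ∀ y ∈ S,
      ∑ f : F, max (d k f) 0 * y f ≤ ∑ f : F, max (d k f) 0 * e (k + 1) f)
    (hrec : ∀ k f, d (k + 1) f = d k f + q f - e (k + 1) f) :
    ∃ C, ∀ K f, d K f ≤ C := by
  set n : ℝ := (Fintype.card F : ℝ)
  set B : ℝ := ∑ f, (n / (2 * ε * q f)) ^ 2 + n
  have hW : ∀ k, 0 ≤ 2 * ε * ∑ f, max (d k f) 0 * q f := fun k =>
    mul_nonneg (by positivity) (sum_nonneg fun f _ => mul_nonneg (le_max_right _ _) (hq f).1.le)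
  have hV : ∀ k, lyapunov (d k) ≤ B := by
    refine le_of_drift_le ?_ (lyapunov_drift hq hS01 hfeas heS hmax hrec) fun k hk => ?_
    · have hV0 : lyapunov (d 0) = 0 := by simp [lyapunov, hd0]
      rw [hV0]
      positivity
    · linarith [lyapunov_le_of_weighted_lt (fun f => (hq f).1) (by positivity) hk, hW k]
  exact ⟨Real.sqrt B, fun K f => (le_sqrt_lyapunov (d K) f).trans (Real.sqrt_le_sqrt (hV K))⟩

end MaxWeight

theorem maximizing_policy_fulfills_general
    {F : Type*} [Fintype F] (ε : ℝ) (hε : 0 < ε)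
    (q : F → ℝ) (hq : ∀ f, 0 < q f ∧ q f ≤ 1)
    (S : Set (F → ℝ))
    (hS01 : ∀ y ∈ S, ∀ f, 0 ≤ y f ∧ y f ≤ 1)
    (hfeas : ∃ yhat ∈ S, ∀ f, (1 + ε) * q f ≤ yhat f)
    (d : ℕ → F → ℝ) (e : ℕ → F → ℝ)
    (hd0 : ∀ f, d 0 f = 0)
    (heS : ∀ k, e (k + 1) ∈ S)
    (hmax : ∀ k, ∀ y ∈ S,
      ∑ f : F, max (d k f) 0 * y f ≤ ∑ f : F, max (d k f) 0 * e (k + 1) f)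
    (hrec : ∀ k f, d (k + 1) f = d k f + q f - e (k + 1) f) :
    (∀ f : F,
        q f ≤ liminf (fun K : ℕ => (1 / (K : ℝ)) * ∑ k ∈ Finset.Icc 1 K, e k f) atTop)
    ∧ (∀ f : F, limsup (fun K : ℕ => d K f / (K : ℝ)) atTop ≤ 0) := by
  obtain ⟨C, hC⟩ := exists_forall_debt_le hε hq hS01 hfeas hd0 heS hmax hrec
  have hdebt : ∀ f K, d K f = K * q f - ∑ k ∈ Icc 1 K, e k f := fun f =>
    eq_sub_sum_Icc_of_rec (hd0 f) (fun k => hrec k f)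
  have hserved : ∀ f K, ∑ k ∈ Icc 1 K, e k f ≤ K := fun f =>
    sum_Icc_le_of_le_one fun k => (hS01 _ (heS k) f).2
  refine ⟨fun f => le_liminf_average_of_sub_le (C := C) (hserved f) fun K => ?_,
    fun f => limsup_div_le_zero_of_le (fun K => ?_) fun K => hC K f⟩
  · rw [← hdebt]
    exact hC K f
  · have hqK : 0 ≤ (K : ℝ) * q f := mul_nonneg K.cast_nonneg (hq f).1.le
    linarith [hdebt f K, hserved f K]

/-- **Deterministic analogue of Theorem 1 (fulfillment).** Under strict feasibility, the
debt-weighted maximizing policy fulfills every flow: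
`liminf_{K→∞} (1/K) ∑_{k=1}^{K} e k f ≥ q f` for every `f`; equivalently,
`limsup_{K→∞} d K f / K ≤ 0` for every `f`. -/
theorem maximizing_policy_fulfills
    {F : Type*} [Fintype F] (ε : ℝ) (hε : 0 < ε)
    (q : F → ℝ) (hq : ∀ f, 0 < q f ∧ q f ≤ 1)
    (S : Set (F → ℝ)) (hS : S.Nonempty)
    (hS01 : ∀ y ∈ S, ∀ f, 0 ≤ y f ∧ y f ≤ 1)
    (hfeas : ∃ yhat ∈ S, ∀ f, (1 + ε) * q f ≤ yhat f)
    (d : ℕ → F → ℝ) (e : ℕ → F → ℝ)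
    (hd0 : ∀ f, d 0 f = 0)
    (heS : ∀ k, e (k + 1) ∈ S)
    (hmax : ∀ k, ∀ y ∈ S,
      ∑ f : F, max (d k f) 0 * y f ≤ ∑ f : F, max (d k f) 0 * e (k + 1) f)
    (hrec : ∀ k f, d (k + 1) f = d k f + q f - e (k + 1) f) :
    (∀ f : F,
        q f ≤ liminf (fun K : ℕ => (1 / (K : ℝ)) * ∑ k ∈ Finset.Icc 1 K, e k f) atTop)
    ∧ (∀ f : F, limsup (fun K : ℕ => d K f / (K : ℝ)) atTop ≤ 0) :=
  maximizing_policy_fulfills_general ε hε q hq S hS01 hfeas d e hd0 heS hmax hrec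
end
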